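/- The polynomials h_m^{(n)}(q) satisfy the recurrence: for m ≥ 1 odd, h_m^{(n)}(q) = (1+q^{2n-2}) h_{m-1}^{(n-1)}(q); and for m ≥ 2 even, h_m^{(n)}(q) = (1+q^{2n-2}) h_{m-1}^{(n-1)}(q) + [n-1 choose m/2]_{q⁴} - [n-1 choose m/2 - 1]_{q⁴}. -/
import Mathlib


open Finset

noncomputable section

/-- The field of rational functions `ℚ(q)`. -/
abbrev K : Type := RatFunc ℚ

/-- The variable `q`. -/
def q : K := RatFunc.X

/-- The Pochhammer symbol `(X;Qb)_r = ∏_{j=0}^{r-1} (1 - X Qb^j)`. -/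
def pch (X Qb : K) (r : ℕ) : K := ∏ j ∈ Finset.range r, (1 - X * Qb ^ j)

/-- The Gaussian binomial coefficient `[a choose b]_Qb = (Qb^a;Qb^{-1})_b / (Qb;Qb)_b`. -/
def gb (a b : ℕ) (Qb : K) : K := pch (Qb ^ a) Qb⁻¹ b / pch Qb Qb b

/-- The explicit formula for `h_m^{(n)}(q)`:
`h_m^{(n)}(q) = ∑_{k=0}^{⌊m/2⌋} (-q^{2n-2};q^{-2})_{m-2k}
  ( [n-m+2k-1 choose k]_{q⁴} - [n-m+2k-1 choose k-1]_{q⁴} )`,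
with the convention `[· choose -1]_{q⁴} = 0`. -/
def hExpl (n m : ℕ) : K :=
  ∑ k ∈ Finset.range (m / 2 + 1),
    pch (-(q ^ (2 * n - 2))) ((q ^ 2)⁻¹) (m - 2 * k) *
      (gb (n - m + 2 * k - 1) k (q ^ 4) -
        if k = 0 then 0 else gb (n - m + 2 * k - 1) (k - 1) (q ^ 4))

lemma q_ne_zero : (q : K) ≠ 0 := RatFunc.X_ne_zero

lemma pch_step (n : ℕ) (hn : 2 ≤ n) (s : ℕ) :
    pch (-(q ^ (2 * n - 2))) ((q ^ 2)⁻¹) (s + 1)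
      = (1 + q ^ (2 * n - 2)) * pch (-(q ^ (2 * (n - 1) - 2))) ((q ^ 2)⁻¹) s := by
  unfold pch
  rw [Finset.prod_range_succ']
  have hq2 : (q ^ 2 : K) ≠ 0 := pow_ne_zero _ q_ne_zero
  have key : ∀ j : ℕ, (q:K) ^ (2 * n - 2) * ((q ^ 2)⁻¹) ^ (j + 1)
      = q ^ (2 * (n - 1) - 2) * ((q ^ 2)⁻¹) ^ j := by
    intro j
    set a := 2 * (n - 1) - 2 with ha
    have h1 : (2 * n - 2) = a + 2 := by omega
    rw [h1, pow_add]
    have h2 : (q:K)^2 * ((q^2)⁻¹) = 1 := mul_inv_cancel₀ hq2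
    calc q ^ a * q ^ 2 * ((q ^ 2)⁻¹) ^ (j + 1)
        = q ^ a * ((q^2)⁻¹)^j * (q^2 * (q^2)⁻¹) := by rw [pow_succ]; ring
      _ = q ^ a * ((q ^ 2)⁻¹) ^ j := by rw [h2, mul_one]
  rw [mul_comm]
  congr 1
  · simp
  · apply Finset.prod_congr rfl
    intro j _
    rw [neg_mul, sub_neg_eq_add, neg_mul, sub_neg_eq_add, key j]


/-- The recurrence for `h_m^{(n)}(q)`: for odd `m ≥ 1`,
`h_m^{(n)}(q) = (1+q^{2n-2}) h_{m-1}^{(n-1)}(q)`, and for even `m ≥ 2`,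
`h_m^{(n)}(q) = (1+q^{2n-2}) h_{m-1}^{(n-1)}(q) + [n-1 choose m/2]_{q⁴} - [n-1 choose m/2-1]_{q⁴}`. -/
theorem h_recurrence (n m : ℕ) (hm1 : 1 ≤ m) (hm : m ≤ n - 1) :
    (Odd m → hExpl n m = (1 + q ^ (2 * n - 2)) * hExpl (n - 1) (m - 1)) ∧
    (Even m → 2 ≤ m →
      hExpl n m = (1 + q ^ (2 * n - 2)) * hExpl (n - 1) (m - 1) +
        gb (n - 1) (m / 2) (q ^ 4) - gb (n - 1) (m / 2 - 1) (q ^ 4)) := by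
  have hn : 2 ≤ n := by omega
  constructor
  · intro hodd
    have hmod : m % 2 = 1 := Nat.odd_iff.mp hodd
    unfold hExpl
    have h2 : (m - 1) / 2 = m / 2 := by omega
    rw [h2, Finset.mul_sum]
    apply Finset.sum_congr rfl
    intro k hk
    have hk' : k ≤ m / 2 := by
      have := Finset.mem_range.mp hk; omega
    have hms : m - 2 * k = (m - 1 - 2 * k) + 1 := by omega
    rw [hms, pch_step n hn]
    have hidx : n - 1 - (m - 1) + 2 * k - 1 = n - m + 2 * k - 1 := by omega
    rw [hidx]
    ring
  · intro heven h2m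
    have hmod : m % 2 = 0 := Nat.even_iff.mp heven
    have ht1 : 1 ≤ m / 2 := by omega
    unfold hExpl
    rw [Finset.sum_range_succ]
    have hlast0 : m - 2 * (m / 2) = 0 := by omega
    have hlastidx : n - m + 2 * (m / 2) - 1 = n - 1 := by omega
    rw [hlast0, hlastidx]
    have hpch0 : pch (-(q ^ (2 * n - 2))) ((q ^ 2)⁻¹) 0 = 1 := by simp [pch]
    rw [hpch0, if_neg (by omega : ¬ m / 2 = 0)]
    have h2 : (m - 1) / 2 + 1 = m / 2 := by omega
    rw [h2, Finset.mul_sum]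
    have hsum : ∑ k ∈ Finset.range (m / 2),
        pch (-(q ^ (2 * n - 2))) ((q ^ 2)⁻¹) (m - 2 * k) *
          (gb (n - m + 2 * k - 1) k (q ^ 4) -
            if k = 0 then 0 else gb (n - m + 2 * k - 1) (k - 1) (q ^ 4))
        = ∑ k ∈ Finset.range (m / 2),
            (1 + q ^ (2 * n - 2)) *
              (pch (-(q ^ (2 * (n - 1) - 2))) ((q ^ 2)⁻¹) (m - 1 - 2 * k) *
                (gb (n - 1 - (m - 1) + 2 * k - 1) k (q ^ 4) -
                  if k = 0 then 0 else gb (n - 1 - (m - 1) + 2 * k - 1) (k - 1) (q ^ 4))) := by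
      apply Finset.sum_congr rfl
      intro k hk
      have hk' : k < m / 2 := Finset.mem_range.mp hk
      have hms : m - 2 * k = (m - 1 - 2 * k) + 1 := by omega
      rw [hms, pch_step n hn]
      have hidx : n - 1 - (m - 1) + 2 * k - 1 = n - m + 2 * k - 1 := by omega
      rw [hidx]
      ring
    rw [hsum]
    ring

end
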